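/- Suppose λ is a singular cardinal, f⃗ = ⟨f_β | β < λ⁺⟩ is a scale for λ, and ν ∈ reg(λ) \ {ℵ₀, cf(λ)}. Then SNR⁻(λ⁺, ν, E^{λ⁺}_ν ∩ V(f⃗)) holds: for every stationary T₀ ⊆ E^{λ⁺}_ν ∩ V(f⃗), there exists φ : λ⁺ → ν such that for stationarily many α ∈ T₀ there is a club in α on which φ is strictly increasing. -/

import Mathlib

open Cardinal Set Ordinal

/-- `C` is unbounded in `α`. -/
def UnbIn (C : Set Ordinal) (α : Ordinal) : Prop :=
  ∀ β < α, ∃ γ ∈ C, β < γ ∧ γ < α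

/-- `C` is closed in `α`: every nonzero limit point of `C` below `α` belongs to `C`. -/
def ClosedIn (C : Set Ordinal) (α : Ordinal) : Prop :=
  ∀ β < α, 0 < β → UnbIn C β → β ∈ C

/-- `C` is a club (closed unbounded) subset of `α`. -/
def ClubIn (C : Set Ordinal) (α : Ordinal) : Prop :=
  C ⊆ Set.Iio α ∧ ClosedIn C α ∧ UnbIn C α

/-- `S` is stationary in `α`. -/
def StatIn (S : Set Ordinal) (α : Ordinal) : Prop :=
  ∀ C, ClubIn C α → (S ∩ C).Nonempty

/-- The trace of `S` below `κ`: ordinals of uncountable cofinality in which `S` reflects. -/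
def Tr (κ : Ordinal) (S : Set Ordinal) : Set Ordinal :=
  {β | β < κ ∧ Cardinal.aleph0 < β.cof ∧ StatIn (S ∩ Set.Iio β) β}

/-- `E^κ_θ`, the set of ordinals below `κ` of cofinality `θ`. -/
def Ecof (κ : Ordinal) (θ : Cardinal) : Set Ordinal :=
  {α | α < κ ∧ α.cof = θ}

/-- The set of accumulation points of `C` that belong to `C`. -/
def accSet (C : Set Ordinal) : Set Ordinal :=
  {β ∈ C | 0 < β ∧ UnbIn C β}

/-- The order type of a set of ordinals: the unique ordinal whose initial segment
order-embeds onto the set. -/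
noncomputable def otp (x : Set Ordinal) : Ordinal :=
  sInf {o : Ordinal | ∃ f : Ordinal → Ordinal,
    StrictMonoOn f (Set.Iio o) ∧ f '' Set.Iio o = x}

/-- The partition principle `Prt(S, θ, T)` (computed inside `κ`). -/
def Prt (κ : Ordinal) (S : Set Ordinal) (θ : Cardinal) (T : Set Ordinal) : Prop :=
  ∃ P : Ordinal → Set Ordinal,
    (∀ i < θ.ord, P i ⊆ S) ∧
    Set.PairwiseDisjoint (Set.Iio θ.ord) P ∧
    (S ⊆ ⋃ i ∈ Set.Iio θ.ord, P i) ∧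
    StatIn (T ∩ ⋂ i ∈ Set.Iio θ.ord, Tr κ (P i)) κ

/-- The principle `SNR⁻(κ, ν, T)`. -/
def SNRm (κ : Ordinal) (ν : Cardinal) (T : Set Ordinal) : Prop :=
  ∀ T₀ ⊆ T ∩ Ecof κ ν, StatIn T₀ κ →
    ∃ φ : Ordinal → Ordinal, (∀ β < κ, φ β < ν.ord) ∧
      StatIn {α ∈ T₀ | ∃ c, ClubIn c α ∧ StrictMonoOn φ c} κ

/-- The simultaneous partition principle `Prp(S, ν, T)` (computed inside `κ`). -/
def Prp (κ : Ordinal) (S : Set Ordinal) (ν : Cardinal) (T : Set Ordinal) : Prop :=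
  ∀ θ : Cardinal, θ ≤ ν →
    ∀ Si : Ordinal → Set Ordinal, (∀ i < θ.ord, Si i ⊆ S) →
      ∀ T' ⊆ T ∩ ⋂ i ∈ Set.Iio θ.ord, Tr κ (Si i), StatIn T' κ →
        ∃ I : Set Ordinal, I ⊆ Set.Iio θ.ord ∧ (∀ j < θ.ord, ∃ i ∈ I, j ≤ i) ∧
          ∃ S' : Ordinal → Set Ordinal,
            (∀ i ∈ I, S' i ⊆ Si i) ∧
            (∀ i ∈ I, StatIn (S' i) κ) ∧
            Set.PairwiseDisjoint I S' ∧
            StatIn (T' ∩ ⋂ i ∈ I, Tr κ (S' i)) κ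

/-- `⟨lams, f⟩` is a scale for the singular cardinal `lam`. -/
def IsScale (lam : Cardinal) (lams : Ordinal → Cardinal) (f : Ordinal → Ordinal → Ordinal) : Prop :=
  (∀ i < lam.ord.cof.ord, (lams i).IsRegular) ∧
  (∀ i < lam.ord.cof.ord, ∀ j < lam.ord.cof.ord, i < j → lams i < lams j) ∧
  (∀ i < lam.ord.cof.ord, lams i < lam) ∧
  (∀ c < lam, ∃ i < lam.ord.cof.ord, c < lams i) ∧
  (∀ γ < (Order.succ lam).ord, ∀ i < lam.ord.cof.ord, f γ i < (lams i).ord) ∧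
  (∀ γ < (Order.succ lam).ord, ∀ δ < (Order.succ lam).ord, γ < δ →
    ∃ i < lam.ord.cof.ord, ∀ j, i ≤ j → j < lam.ord.cof.ord → f γ j < f δ j) ∧
  (∀ g : Ordinal → Ordinal, (∀ i < lam.ord.cof.ord, g i < (lams i).ord) →
    ∃ γ < (Order.succ lam).ord, ∃ i < lam.ord.cof.ord,
      ∀ j, i ≤ j → j < lam.ord.cof.ord → g j < f γ j)

/-- `α` is a very good point of the scale `f`. -/
def VeryGoodAt (lam : Cardinal) (f : Ordinal → Ordinal → Ordinal) (α : Ordinal) : Prop :=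
  ∃ C, ClubIn C α ∧ ∃ i < lam.ord.cof.ord,
    ∀ γ ∈ C, ∀ δ ∈ C, γ < δ → ∀ j, i ≤ j → j < lam.ord.cof.ord → f γ j < f δ j

/-- The least size of a family of `θ`-sized subsets of `ν` such that every club
in `ν` contains a member of the family. -/
noncomputable def CC (ν θ : Cardinal) : Cardinal :=
  sInf { c : Cardinal | ∃ 𝒞 : Ordinal → Set Ordinal,
    (∀ i < c.ord, 𝒞 i ⊆ Set.Iio ν.ord ∧ (otp (𝒞 i)).card = θ) ∧
    ∀ b, ClubIn b ν.ord → ∃ i < c.ord, 𝒞 i ⊆ b }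

/-- `𝒟(ν, μ) = cf([ν]^μ, ⊇)`: the least size of a family of `μ`-sized subsets of `ν`
such that every `μ`-sized subset of `ν` contains a member of the family. -/
noncomputable def DD (ν μ : Cardinal) : Cardinal :=
  sInf { c : Cardinal | ∃ 𝒟 : Ordinal → Set Ordinal,
    (∀ i < c.ord, 𝒟 i ⊆ Set.Iio ν.ord ∧ (otp (𝒟 i)).card = μ) ∧
    ∀ a : Set Ordinal, a ⊆ Set.Iio ν.ord → (otp a).card = μ → ∃ i < c.ord, 𝒟 i ⊆ a }

/-!
By a pigeonhole argument over the fewer than `λ⁺` possible indices, stationarily many `α ∈ T₀`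
carry a very-good club `C_α` on which the single coordinate `γ ↦ f γ j` is strictly increasing,
for one fixed `j` with `ν < λ_j`. Along `C_α` this coordinate converges to some `ζ_α < λ_j`
(as `cf ζ_α ≤ cf α = ν < λ_j`), and a second pigeonhole makes `ζ_α = ζ` constant on a
stationary set. Then `φ = ψ_ζ ∘ f(·)(j)` works, where `ψ_ζ x` is the least index `ξ` with
`x ≤ e ξ` for a fundamental sequence `e` of `ζ`: on the club of points `y ∈ C_α` such that
`f y j` has passed `e (ψ_ζ (f x j))` for every earlier `x ∈ C_α`, `ψ_ζ` strictly increases.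
-/

universe u

theorem isSuccLimit_of_aleph0_le_cof {α : Ordinal} (hα : ℵ₀ ≤ α.cof) : Order.IsSuccLimit α :=
  Ordinal.one_lt_cof_iff.mp (one_lt_aleph0.trans_le hα)

theorem UnbIn.mono {C C' : Set Ordinal} {α : Ordinal} (hC : UnbIn C α) (h : C ⊆ C') :
    UnbIn C' α := fun β hβ =>
  let ⟨γ, hγ, hβγ, hγα⟩ := hC β hβ
  ⟨γ, h hγ, hβγ, hγα⟩

theorem StatIn.mono {S S' : Set Ordinal} {κ : Ordinal} (hS : StatIn S κ) (h : S ⊆ S') :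
    StatIn S' κ := fun C hC => (hS C hC).mono (Set.inter_subset_inter_left C h)

theorem clubIn_Iio {κ : Ordinal} (hκ : Order.IsSuccLimit κ) : ClubIn (Iio κ) κ :=
  ⟨subset_rfl, fun _ hβ _ _ => hβ,
    fun _ hβ => ⟨_, hκ.succ_lt hβ, Order.lt_succ _, hκ.succ_lt hβ⟩⟩

theorem StatIn.nonempty {S : Set Ordinal} {κ : Ordinal} (hS : StatIn S κ)
    (hκ : Order.IsSuccLimit κ) : S.Nonempty :=
  (hS _ (clubIn_Iio hκ)).mono Set.inter_subset_left

theorem iSup_Iio_lt_of_card_lt_cof {o c : Ordinal} {h : Iio o → Ordinal} (ho : o.card < c.cof)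
    (hh : ∀ i, h i < c) : ⨆ i, h i < c :=
  lift_iSup_lt_of_lt_cof
    (by simpa [Cardinal.mk_Iio_ordinal, ← lift_cof, ← Ordinal.lift_card] using ho) hh

theorem exists_strictMonoOn_cofinal (ζ : Ordinal) :
    ∃ e : Ordinal → Ordinal, StrictMonoOn e (Iio ζ.cof.ord) ∧ (∀ ξ < ζ.cof.ord, e ξ < ζ) ∧
      ∀ x < ζ, ∃ ξ < ζ.cof.ord, x ≤ e ξ := by
  obtain ⟨s, hs⟩ := exists_isFundamentalSeq (o := ζ) rfl
  refine ⟨fun ξ => if h : ξ < ζ.cof.ord then s ⟨ξ, h⟩ else 0, fun ξ hξ η hη hξη => ?_,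
    fun ξ hξ => ?_, fun x hx => ?_⟩
  · simp only [dif_pos (mem_Iio.mp hξ), dif_pos (mem_Iio.mp hη)]
    exact @hs.strictMono ⟨ξ, hξ⟩ ⟨η, hη⟩ hξη
  · simp only [dif_pos hξ]
    exact (s ⟨ξ, hξ⟩).2
  · obtain ⟨_, ⟨⟨ξ, hξ⟩, rfl⟩, hxξ⟩ := hs.isCofinal_range ⟨x, hx⟩
    refine ⟨ξ, hξ, ?_⟩
    simp only [dif_pos (mem_Iio.mp hξ)]
    exact hxξ

theorem exists_omega_limit_of_step {α : Ordinal} (hα : ℵ₀ < α.cof)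
    {Q : Ordinal → Ordinal → Prop} (step : ∀ δ < α, ∃ δ', δ < δ' ∧ δ' < α ∧ Q δ δ')
    {β : Ordinal} (hβ : β < α) :
    ∃ d, β < d ∧ d < α ∧ ∀ x < d, ∃ δ δ', x < δ ∧ δ < δ' ∧ δ' < d ∧ Q δ δ' := by
  have hlim : Order.IsSuccLimit α := isSuccLimit_of_aleph0_le_cof hα.le
  choose! next hlt hnext hQ using step
  let b : ℕ → Ordinal := fun n => next^[n] (Order.succ β)
  have hb_succ (n : ℕ) : b (n + 1) = next (b n) := Function.iterate_succ_apply' _ _ _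
  have hbα (n : ℕ) : b n < α := by
    induction n with
    | zero => exact hlim.succ_lt hβ
    | succ n ih => rw [hb_succ]; exact hnext _ ih
  have hb_lt (n : ℕ) : b n < b (n + 1) := by rw [hb_succ]; exact hlt _ (hbα n)
  refine ⟨⨆ n, b n, (Order.lt_succ β).trans_le (Ordinal.le_iSup b 0),
    lift_iSup_lt_of_lt_cof ?_ hbα, fun x hx => ?_⟩
  · simpa using hα
  obtain ⟨n, hn⟩ := Ordinal.lt_iSup_iff.mp hx
  refine ⟨b n, b (n + 1), hn, hb_lt n, (hb_lt (n + 1)).trans_le (Ordinal.le_iSup b _), ?_⟩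
  rw [hb_succ]
  exact hQ _ (hbα n)

theorem ClubIn.iInter {κ o : Ordinal} {D : Ordinal → Set Ordinal} (hκ : ℵ₀ < κ.cof)
    (ho₀ : 0 < o) (ho : o.card < κ.cof) (hD : ∀ i < o, ClubIn (D i) κ) :
    ClubIn (⋂ i ∈ Iio o, D i) κ := by
  have hlim : Order.IsSuccLimit κ := isSuccLimit_of_aleph0_le_cof hκ.le
  refine ⟨fun x hx => (hD 0 ho₀).1 (mem_iInter₂.mp hx 0 ho₀), fun β hβ hβ₀ hunb => ?_,
    fun β hβ => ?_⟩
  · exact mem_iInter₂.mpr fun i hi =>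
      (hD i hi).2.1 β hβ hβ₀ (hunb.mono fun x hx => mem_iInter₂.mp hx i hi)
  have step : ∀ δ < κ, ∃ δ', δ < δ' ∧ δ' < κ ∧ ∀ i < o, ∃ γ ∈ D i, δ < γ ∧ γ < δ' := by
    intro δ hδ
    choose γ hγD hδγ hγκ using fun (i : Iio o) => (hD i i.2).2.2 δ hδ
    have hsup : ⨆ i, γ i < κ := iSup_Iio_lt_of_card_lt_cof ho hγκ
    refine ⟨Order.succ (⨆ i, γ i), (hδγ ⟨0, ho₀⟩).trans_le ?_, hlim.succ_lt hsup,
      fun i hi => ⟨γ ⟨i, hi⟩, hγD ⟨i, hi⟩, hδγ _, ?_⟩⟩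
    · exact (Ordinal.le_iSup γ _).trans (Order.le_succ _)
    · exact Order.lt_succ_of_le (Ordinal.le_iSup γ _)
  obtain ⟨d, hβd, hdκ, hd⟩ := exists_omega_limit_of_step hκ step hβ
  refine ⟨d, mem_iInter₂.mpr fun i hi => (hD i hi).2.1 d hdκ (zero_le.trans_lt hβd) ?_,
    hβd, hdκ⟩
  intro x hx
  obtain ⟨δ, δ', hxδ, -, hδ'd, hQ⟩ := hd x hx
  obtain ⟨γ, hγ, hδγ, hγδ'⟩ := hQ i hi
  exact ⟨γ, hγ, hxδ.trans hδγ, hγδ'.trans hδ'd⟩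

theorem StatIn.exists_statIn_inter {κ o : Ordinal} {S : Set Ordinal} {A : Ordinal → Set Ordinal}
    (hS : StatIn S κ) (hκ : ℵ₀ < κ.cof) (ho : o.card < κ.cof)
    (hcov : ∀ x ∈ S, ∃ i < o, x ∈ A i) : ∃ i < o, StatIn (S ∩ A i) κ := by
  obtain ⟨x₀, hx₀⟩ := hS.nonempty (isSuccLimit_of_aleph0_le_cof hκ.le)
  obtain ⟨i₀, hi₀, -⟩ := hcov x₀ hx₀
  by_contra! hnot
  have hclub : ∀ i < o, ∃ D, ClubIn D κ ∧ S ∩ A i ∩ D = ∅ := fun i hi => by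
    simpa [StatIn, Set.not_nonempty_iff_eq_empty] using hnot i hi
  choose! D hD hSD using hclub
  obtain ⟨x, hxS, hxD⟩ := hS _ (ClubIn.iInter hκ (zero_le.trans_lt hi₀) ho hD)
  obtain ⟨i, hi, hxA⟩ := hcov x hxS
  exact (hSD i hi).subset ⟨⟨hxS, hxA⟩, mem_iInter₂.mp hxD i hi⟩

theorem StatIn.exists_statIn_eventually {κ o : Ordinal} {T : Set Ordinal}
    {P : Ordinal → Ordinal → Prop} (hT : StatIn T κ) (hκ : ℵ₀ < κ.cof) (ho : o.card < κ.cof)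
    (hP : ∀ α ∈ T, ∃ i < o, ∀ j, i ≤ j → j < o → P α j) {i₀ : Ordinal} (hi₀ : i₀ < o) :
    ∃ j, i₀ ≤ j ∧ j < o ∧ StatIn {α ∈ T | P α j} κ := by
  choose! i hio hi using hP
  obtain ⟨j, hj, hTj⟩ := hT.exists_statIn_inter (A := fun j => {α | max (i α) i₀ = j}) hκ ho
    fun α hα => ⟨_, max_lt (hio α hα) hi₀, rfl⟩
  obtain ⟨α₀, -, hα₀⟩ := hTj.nonempty (isSuccLimit_of_aleph0_le_cof hκ.le)
  refine ⟨j, hα₀ ▸ le_max_right _ _, hj, hTj.mono fun α ⟨hα, hαj⟩ => ⟨hα, ?_⟩⟩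
  exact hi α hα j (hαj ▸ le_max_left _ _) hj

theorem ClubIn.clubIn_closurePoints {α : Ordinal} {C : Set Ordinal} (hα : ℵ₀ < α.cof)
    (hC : ClubIn C α) {R : Ordinal → Ordinal → Prop} (hR : ∀ γ ∈ C, ∃ γ' ∈ C, R γ γ')
    (hR_anti : ∀ γ₁ ∈ C, ∀ γ₂ ∈ C, γ₁ < γ₂ → ∀ γ', R γ₂ γ' → R γ₁ γ') :
    ClubIn {δ ∈ C | ∀ γ ∈ C, γ < δ → ∃ γ' ∈ C, γ' < δ ∧ R γ γ'} α := by
  have hlim : Order.IsSuccLimit α := isSuccLimit_of_aleph0_le_cof hα.le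
  refine ⟨fun δ hδ => hC.1 hδ.1, fun β hβ hβ₀ hunb => ⟨?_, fun γ hγ hγβ => ?_⟩,
    fun β hβ => ?_⟩
  · exact hC.2.1 β hβ hβ₀ (hunb.mono fun δ hδ => hδ.1)
  · obtain ⟨δ, hδ, hγδ, hδβ⟩ := hunb γ hγβ
    obtain ⟨γ', hγ', hγ'δ, hR⟩ := hδ.2 γ hγ hγδ
    exact ⟨γ', hγ', hγ'δ.trans hδβ, hR⟩
  have step : ∀ δ < α, ∃ δ', δ < δ' ∧ δ' < α ∧
      (δ' ∈ C ∧ ∀ γ ∈ C, γ < δ → ∃ γ' ∈ C, γ' < δ' ∧ R γ γ') := by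
    intro δ hδ
    obtain ⟨σ, hσ, hδσ, hσα⟩ := hC.2.2 δ hδ
    obtain ⟨γ', hγ', hR⟩ := hR σ hσ
    obtain ⟨δ', hδ', hσγ'δ', hδ'α⟩ := hC.2.2 (max σ γ') (max_lt hσα (hC.1 hγ'))
    refine ⟨δ', hδσ.trans ((le_max_left _ _).trans_lt hσγ'δ'), hδ'α, hδ', fun γ hγ hγδ => ?_⟩
    exact ⟨γ', hγ', (le_max_right _ _).trans_lt hσγ'δ',
      hR_anti γ hγ σ hσ (hγδ.trans hδσ) γ' hR⟩
  obtain ⟨d, hβd, hdα, hd⟩ := exists_omega_limit_of_step hα step hβ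
  refine ⟨d, ⟨hC.2.1 d hdα (zero_le.trans_lt hβd) fun x hx => ?_, fun γ hγ hγd => ?_⟩,
    hβd, hdα⟩
  · obtain ⟨δ, δ', hxδ, hδδ', hδ'd, hδ'C, -⟩ := hd x hx
    exact ⟨δ', hδ'C, hxδ.trans hδδ', hδ'd⟩
  · obtain ⟨δ, δ', hγδ, -, hδ'd, -, hQ⟩ := hd γ hγd
    obtain ⟨γ', hγ', hγ'δ', hR⟩ := hQ γ hγ hγδ
    exact ⟨γ', hγ', hγ'δ'.trans hδ'd, hR⟩

def ConvergesOnClub (g : Ordinal → Ordinal) (α ζ : Ordinal) : Prop :=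
  ∃ C, ClubIn C α ∧ StrictMonoOn g C ∧ (∀ γ ∈ C, g γ < ζ) ∧ ∀ x < ζ, ∃ γ ∈ C, x < g γ

theorem ClubIn.convergesOnClub_sSup_image {α : Ordinal.{u}} {C : Set Ordinal.{u}}
    {g : Ordinal.{u} → Ordinal.{u}} (hC : ClubIn C α) (hg : StrictMonoOn g C) :
    ConvergesOnClub g α (sSup (g '' C)) := by
  have : Small.{u} C := small_subset hC.1
  refine ⟨C, hC, hg, fun γ hγ => ?_, fun x hx => ?_⟩
  · obtain ⟨γ', hγ', hγγ', -⟩ := hC.2.2 γ (hC.1 hγ)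
    exact (hg hγ hγ' hγγ').trans_le (le_csSup Ordinal.bddAbove_of_small (mem_image_of_mem g hγ'))
  · obtain ⟨_, ⟨γ, hγ, rfl⟩, hxγ⟩ := exists_lt_of_lt_csSup' hx
    exact ⟨γ, hγ, hxγ⟩

namespace ConvergesOnClub

variable {g : Ordinal → Ordinal} {α ζ : Ordinal}

theorem pos (hg : ConvergesOnClub g α ζ) (hα : 0 < α) : 0 < ζ :=
  let ⟨_, hC, _, hlt, _⟩ := hg
  let ⟨γ, hγ, _⟩ := hC.2.2 0 hα
  zero_le.trans_lt (hlt γ hγ)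

theorem cof_le (hg : ConvergesOnClub g α ζ) : ζ.cof ≤ α.cof := by
  obtain ⟨C, hC, hgC, hlt, hcof⟩ := hg
  obtain ⟨e, -, he_lt, he_cof⟩ := exists_strictMonoOn_cofinal α
  choose! c hcC hec using fun ξ (hξ : ξ < α.cof.ord) => hC.2.2 (e ξ) (he_lt ξ hξ)
  by_contra! hcof_lt
  have hsup : ⨆ ξ : Iio α.cof.ord, g (c ξ) < ζ :=
    iSup_Iio_lt_of_card_lt_cof (by rwa [card_ord]) fun ξ => hlt _ (hcC ξ ξ.2)
  obtain ⟨γ, hγ, hγsup⟩ := hcof _ hsup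
  obtain ⟨ξ, hξ, hγξ⟩ := he_cof γ (hC.1 hγ)
  have hγc : γ < c ξ := hγξ.trans_lt (hec ξ hξ).1
  exact (hγsup.trans (hgC hγ (hcC ξ hξ) hγc)).not_ge
    (Ordinal.le_iSup (fun ξ : Iio α.cof.ord => g (c ξ)) ⟨ξ, hξ⟩)

end ConvergesOnClub

noncomputable def leastIndex (o : Ordinal) (e : Ordinal → Ordinal) (x : Ordinal) : Ordinal :=
  sInf {ξ | ξ < o ∧ x ≤ e ξ}

section leastIndex

variable {o x y : Ordinal} {e : Ordinal → Ordinal}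

theorem leastIndex_spec (h : ∃ ξ < o, x ≤ e ξ) :
    leastIndex o e x < o ∧ x ≤ e (leastIndex o e x) :=
  csInf_mem (s := {ξ | ξ < o ∧ x ≤ e ξ}) (let ⟨ξ, hξ, hx⟩ := h; ⟨ξ, hξ, hx⟩)

theorem leastIndex_lt (ho : 0 < o) : leastIndex o e x < o := by
  rcases eq_empty_or_nonempty {ξ | ξ < o ∧ x ≤ e ξ} with h | ⟨ξ, hξ, hx⟩
  · rwa [leastIndex, h, Ordinal.sInf_empty]
  · exact (leastIndex_spec ⟨ξ, hξ, hx⟩).1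

theorem leastIndex_mono (hxy : x ≤ y) (hy : ∃ ξ < o, y ≤ e ξ) :
    leastIndex o e x ≤ leastIndex o e y :=
  csInf_le_csInf (OrderBot.bddBelow _) (let ⟨ξ, hξ, hy⟩ := hy; ⟨ξ, hξ, hy⟩)
    fun _ hξ => ⟨hξ.1, hxy.trans hξ.2⟩

theorem leastIndex_lt_leastIndex (he : MonotoneOn e (Iio o)) (hx : leastIndex o e x < o)
    (hy : ∃ ξ < o, y ≤ e ξ) (h : e (leastIndex o e x) < y) :
    leastIndex o e x < leastIndex o e y := by
  by_contra! hyx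
  obtain ⟨hyo, hye⟩ := leastIndex_spec hy
  exact (hye.trans (he hyo hx hyx)).not_gt h

end leastIndex

theorem ConvergesOnClub.exists_clubIn_strictMonoOn_leastIndex {g e : Ordinal → Ordinal}
    {α ζ o : Ordinal} (hα : ℵ₀ < α.cof) (hg : ConvergesOnClub g α ζ)
    (he : MonotoneOn e (Iio o)) (he_lt : ∀ ξ < o, e ξ < ζ) (he_cof : ∀ x < ζ, ∃ ξ < o, x ≤ e ξ) :
    ∃ c, ClubIn c α ∧ StrictMonoOn (leastIndex o e ∘ g) c := by
  obtain ⟨C, hC, hgC, hlt, hcof⟩ := hg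
  have hψ (γ : Ordinal) (hγ : γ ∈ C) := leastIndex_spec (he_cof _ (hlt γ hγ))
  refine ⟨_, hC.clubIn_closurePoints hα (R := fun γ γ' => e (leastIndex o e (g γ)) < g γ')
    (fun γ hγ => hcof _ (he_lt _ (hψ γ hγ).1)) ?_, fun x hx y hy hxy => ?_⟩
  · intro γ₁ hγ₁ γ₂ hγ₂ h12 γ' hR
    refine (he (hψ γ₁ hγ₁).1 (hψ γ₂ hγ₂).1 ?_).trans_lt hR
    exact leastIndex_mono (hgC hγ₁ hγ₂ h12).le (he_cof _ (hlt γ₂ hγ₂))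
  · obtain ⟨γ', hγ', hγ'y, hR⟩ := hy.2 x hx.1 hxy
    exact leastIndex_lt_leastIndex he (hψ x hx.1).1 (he_cof _ (hlt y hy.1))
      (hR.trans (hgC hγ' hy.1 hγ'y))

theorem exists_strictMonoOn_comp_of_convergesOnClub {ζ : Ordinal} (hζ : 0 < ζ) :
    ∃ ψ : Ordinal → Ordinal, (∀ x, ψ x < ζ.cof.ord) ∧ ∀ ⦃g : Ordinal → Ordinal⦄ ⦃α : Ordinal⦄,
      ℵ₀ < α.cof → ConvergesOnClub g α ζ → ∃ c, ClubIn c α ∧ StrictMonoOn (ψ ∘ g) c := by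
  obtain ⟨e, he, he_lt, he_cof⟩ := exists_strictMonoOn_cofinal ζ
  exact ⟨leastIndex ζ.cof.ord e, fun _ => leastIndex_lt (by simpa [Cardinal.ord_pos] using hζ),
    fun _ _ hα hg => hg.exists_clubIn_strictMonoOn_leastIndex hα he.monotoneOn he_lt he_cof⟩

theorem StatIn.exists_statIn_convergesOnClub {κ μ : Ordinal} {T : Set Ordinal}
    {g : Ordinal → Ordinal} (hT : StatIn T κ) (hκ : ℵ₀ < κ.cof) (hμ : μ.card < κ.cof)
    (hg_lt : ∀ α ∈ T, ∀ γ < α, g γ < μ) (hT_cof : ∀ α ∈ T, α.cof < μ.cof)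
    (hT_club : ∀ α ∈ T, ∃ C, ClubIn C α ∧ StrictMonoOn g C) :
    ∃ ζ < μ, StatIn {α ∈ T | ConvergesOnClub g α ζ} κ := by
  have hconv : ∀ α ∈ T, ∃ ζ < μ, ConvergesOnClub g α ζ := by
    intro α hα
    obtain ⟨C, hC, hgC⟩ := hT_club α hα
    have hconv := hC.convergesOnClub_sSup_image hgC
    refine ⟨_, lt_of_le_of_ne ?_ fun h => (hT_cof α hα).not_ge (h ▸ hconv.cof_le), hconv⟩
    exact csSup_le' (forall_mem_image.2 fun γ hγ => (hg_lt α hα γ (hC.1 hγ)).le)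
  choose! Z hZμ hZ using hconv
  obtain ⟨ζ, hζμ, hTζ⟩ := hT.exists_statIn_inter (A := fun ζ => {α | Z α = ζ}) hκ hμ
    fun α hα => ⟨Z α, hZμ α hα, rfl⟩
  exact ⟨ζ, hζμ, hTζ.mono fun α ⟨hα, hαζ⟩ => ⟨hα, hαζ ▸ hZ α hα⟩⟩

theorem VeryGoodAt.eventually_exists_strictMonoOn {lam : Cardinal} {f : Ordinal → Ordinal → Ordinal}
    {α : Ordinal} (h : VeryGoodAt lam f α) :
    ∃ i < lam.ord.cof.ord, ∀ j, i ≤ j → j < lam.ord.cof.ord →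
      ∃ C, ClubIn C α ∧ StrictMonoOn (fun γ => f γ j) C :=
  let ⟨C, hC, i, hi, hinc⟩ := h
  ⟨i, hi, fun j hij hj => ⟨C, hC, fun γ hγ δ hδ hγδ => hinc γ hγ δ hδ hγδ j hij hj⟩⟩

theorem statement13_general (lam : Cardinal) (hlam : Cardinal.aleph0 ≤ lam)
    (lams : Ordinal → Cardinal) (f : Ordinal → Ordinal → Ordinal)
    (hscale : IsScale lam lams f)
    (ν : Cardinal) (hνu : Cardinal.aleph0 < ν)
    (hνlam : ν < lam) :
    SNRm (Order.succ lam).ord ν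
      (Ecof (Order.succ lam).ord ν ∩
        {α | α < (Order.succ lam).ord ∧ α.cof ≠ lam.ord.cof ∧ VeryGoodAt lam f α}) := by
  intro T₀ hT₀ hT₀stat
  obtain ⟨hreg, hlams_mono, hlams_lt, hlams_cof, hf_lt, -, -⟩ := hscale
  have hκcof : (Order.succ lam).ord.cof = Order.succ lam := (Cardinal.isRegular_succ hlam).cof_ord
  have hκ : ℵ₀ < (Order.succ lam).ord.cof := by
    rw [hκcof]
    exact hlam.trans_lt (Order.lt_succ lam)
  have hT₀κ (α : Ordinal) (hα : α ∈ T₀) : α < (Order.succ lam).ord := (hT₀ hα).1.1.1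
  have hT₀cof (α : Ordinal) (hα : α ∈ T₀) : α.cof = ν := (hT₀ hα).1.1.2
  obtain ⟨i₀, hi₀, hνi₀⟩ := hlams_cof ν hνlam
  obtain ⟨j, hi₀j, hj, hT₁⟩ := hT₀stat.exists_statIn_eventually hκ
    (by
      rw [card_ord, hκcof]
      exact ((Ordinal.cof_le_card _).trans_eq (card_ord lam)).trans_lt (Order.lt_succ lam))
    (fun α hα => (hT₀ hα).1.2.2.2.eventually_exists_strictMonoOn) hi₀
  have hνj : ν < lams j := by
    rcases hi₀j.eq_or_lt with rfl | hi₀j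
    exacts [hνi₀, hνi₀.trans (hlams_mono i₀ hi₀ j hj hi₀j)]
  obtain ⟨ζ, -, hT₂⟩ := hT₁.exists_statIn_convergesOnClub (μ := (lams j).ord) hκ
    (by rw [card_ord, hκcof]; exact (hlams_lt j hj).trans (Order.lt_succ lam))
    (fun α hα γ hγ => hf_lt γ (hγ.trans (hT₀κ α hα.1)) j hj)
    (fun α hα => by rw [hT₀cof α hα.1, (hreg j hj).cof_ord]; exact hνj)
    fun α hα => hα.2
  have hT₀aleph0 (α : Ordinal) (hα : α ∈ T₀) : ℵ₀ < α.cof := hT₀cof α hα ▸ hνu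
  obtain ⟨α, hαT, hαζ⟩ := hT₂.nonempty (isSuccLimit_of_aleph0_le_cof hκ.le)
  obtain ⟨ψ, hψ_lt, hψ⟩ := exists_strictMonoOn_comp_of_convergesOnClub
    (hαζ.pos (Ordinal.cof_pos.mp (aleph0_pos.trans (hT₀aleph0 α hαT.1))))
  refine ⟨ψ ∘ fun γ => f γ j, fun _ _ => (hψ_lt _).trans_le ?_,
    hT₂.mono fun α hα => ⟨hα.1.1, hψ (hT₀aleph0 α hα.1.1) hα.2⟩⟩
  exact Cardinal.ord_le_ord.mpr (hαζ.cof_le.trans (hT₀cof α hαT.1).le)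

theorem statement13 (lam : Cardinal) (hlam : Cardinal.aleph0 ≤ lam) (hsing : ¬lam.IsRegular)
    (lams : Ordinal → Cardinal) (f : Ordinal → Ordinal → Ordinal)
    (hscale : IsScale lam lams f)
    (ν : Cardinal) (hν : ν.IsRegular) (hνu : Cardinal.aleph0 < ν)
    (hνlam : ν < lam) (hνcf : ν ≠ lam.ord.cof) :
    SNRm (Order.succ lam).ord ν
      (Ecof (Order.succ lam).ord ν ∩
        {α | α < (Order.succ lam).ord ∧ α.cof ≠ lam.ord.cof ∧ VeryGoodAt lam f α}) :=
  statement13_general lam hlam lams f hscale ν hνu hνlam
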